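/- arXiv:2506.00700 — 3 statements merged into one kernel-verified Lean document; each statement's English description precedes it below -/
import Mathlib

section
/- Under the same hypotheses (f concave, g convex, x⋆ a maximizer of f over the feasible set {g ≤ b} with multiplier λ⋆ ≥ 0 such that x⋆ maximizes L(·, λ⋆) over X and complementary slackness holds), for every κ > λ⋆ the set of maximizers of f over {x ∈ X : g(x) ≤ b} equals the set of maximizers of P_κ(x) = f(x) − κ·max{0, g(x) − b} over X. -/
/-!
At a saddle point `(x⋆, λ⋆)` of the Lagrangian with complementary slackness,
`f y ≤ f x⋆ + λ⋆ (g y - b) ≤ f x⋆ + λ⋆ max{0, g y - b}` for every `y ∈ X`, hence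
`P_κ y + (κ - λ⋆) max{0, g y - b} ≤ f x⋆ = P_κ x⋆`. For `κ > λ⋆` this shows at once that
`f x⋆` is the maximum of `P_κ` over `X`, that every maximizer of `P_κ` is feasible, and
that `P_κ = f` on the feasible set; the two sets of maximizers then coincide.
-/

section ExactPenalty

variable {α : Type*} {f g : α → ℝ} {b : ℝ}

theorem sub_mul_max_zero_of_le {x : α} (κ : ℝ) (hx : g x ≤ b) :
    f x - κ * max 0 (g x - b) = f x := by
  rw [max_eq_left (sub_nonpos.2 hx), mul_zero, sub_zero]

theorem penalized_add_le_of_lagrangian_le {X : Set α} {xstar : α} {lamstar : ℝ}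
    (hlam : 0 ≤ lamstar)
    (hLag : ∀ x ∈ X, f x - lamstar * (g x - b) ≤ f xstar - lamstar * (g xstar - b))
    (hcs : lamstar * (g xstar - b) = 0) (κ : ℝ) :
    ∀ y ∈ X, f y - κ * max 0 (g y - b) + (κ - lamstar) * max 0 (g y - b) ≤ f xstar := by
  intro y hy
  have hL := hLag y hy
  have hmax := mul_le_mul_of_nonneg_left (le_max_right 0 (g y - b)) hlam
  rw [hcs] at hL
  linarith

end ExactPenalty

theorem stmt_1_general (n : ℕ) (X : Set (Fin n → ℝ)) (f g : (Fin n → ℝ) → ℝ) (b : ℝ)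
    (xstar : Fin n → ℝ) (lamstar : ℝ)
    (hxX : xstar ∈ X) (hxfeas : g xstar ≤ b)
    (hlam : 0 ≤ lamstar)
    (hLag : ∀ x ∈ X, f x - lamstar * (g x - b) ≤ f xstar - lamstar * (g xstar - b))
    (hcs : lamstar * (g xstar - b) = 0)
    (κ : ℝ) (hκ : lamstar < κ) :
    {x | x ∈ X ∧ g x ≤ b ∧ ∀ y ∈ X, g y ≤ b → f y ≤ f x} =
      {x | x ∈ X ∧ ∀ y ∈ X,
        f y - κ * max 0 (g y - b) ≤ f x - κ * max 0 (g x - b)} := by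
  have hbound := penalized_add_le_of_lagrangian_le hlam hLag hcs κ
  have hstar : f xstar - κ * max 0 (g xstar - b) = f xstar := sub_mul_max_zero_of_le κ hxfeas
  ext x
  constructor
  · rintro ⟨hx, hgx, hmax⟩
    refine ⟨hx, fun y hy => ?_⟩
    have hstar_le := hmax xstar hxX hxfeas
    have hy_le := hbound y hy
    have hgap := mul_nonneg (sub_pos.2 hκ).le (le_max_left 0 (g y - b))
    rw [sub_mul_max_zero_of_le κ hgx]
    linarith
  · rintro ⟨hx, hmax⟩
    have hstar_le := hmax xstar hxX
    have hgx : g x ≤ b := by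
      have hgap : (κ - lamstar) * max 0 (g x - b) ≤ 0 := by linarith [hbound x hx]
      have hviol := nonpos_of_mul_nonpos_right hgap (sub_pos.2 hκ)
      exact sub_nonpos.1 (max_le_iff.1 hviol).2
    refine ⟨hx, hgx, fun y hy hgy => ?_⟩
    simpa only [sub_mul_max_zero_of_le κ hgx, sub_mul_max_zero_of_le κ hgy] using hmax y hy

/-- Exactness for convex programs: for κ > λ⋆ the constrained maximizers coincide with
the maximizers of the penalized objective. -/
theorem stmt_1 (n : ℕ) (X : Set (Fin n → ℝ)) (f g : (Fin n → ℝ) → ℝ) (b : ℝ)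
    (hf : ConcaveOn ℝ X f) (hg : ConvexOn ℝ X g)
    (xstar : Fin n → ℝ) (lamstar : ℝ)
    (hxX : xstar ∈ X) (hxfeas : g xstar ≤ b)
    (hxmax : ∀ x ∈ X, g x ≤ b → f x ≤ f xstar)
    (hlam : 0 ≤ lamstar)
    (hLag : ∀ x ∈ X, f x - lamstar * (g x - b) ≤ f xstar - lamstar * (g xstar - b))
    (hcs : lamstar * (g xstar - b) = 0)
    (κ : ℝ) (hκ : lamstar < κ) :
    {x | x ∈ X ∧ g x ≤ b ∧ ∀ y ∈ X, g y ≤ b → f y ≤ f x} =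
      {x | x ∈ X ∧ ∀ y ∈ X,
        f y - κ * max 0 (g y - b) ≤ f x - κ * max 0 (g x - b)} :=
  stmt_1_general n X f g b xstar lamstar hxX hxfeas hlam hLag hcs κ hκ
end

section
/- Let b > 0, δ_B > 0, and let w = u + 1 where u ∈ (−1, 0) solves u·e^u = −e^{−δ_B−1}. Then for all 𝔸 ∈ [0, b): (b − 𝔸)/b − log((b − 𝔸)/b) − 1 ≤ δ_B if and only if 𝔸 ≤ w·b. -/
/-!
On `(0, 1]` the map `x ↦ x - log x` is strictly decreasing (its derivative is `1 - 1/x`), and the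
barrier divergence is this map evaluated at `x = (b - A) / b`. The Lambert-type equation for
`u = w - 1` says exactly that `x = 1 - w` is the point where the divergence equals `δB`, so the
constraint `D ≤ δB` amounts to `1 - w ≤ (b - A) / b`, i.e. `A ≤ w b`.
-/

open Real Set

lemma strictAntiOn_sub_log : StrictAntiOn (fun x : ℝ => x - log x) (Ioc 0 1) := by
  apply strictAntiOn_of_deriv_neg (convex_Ioc 0 1)
  · exact continuousOn_id.sub (continuousOn_log.mono fun x hx => hx.1.ne')
  · intro x hx
    rw [interior_Ioc] at hx
    have hderiv : HasDerivAt (fun x : ℝ => x - log x) (1 - x⁻¹) x :=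
      (hasDerivAt_id x).sub (hasDerivAt_log hx.1.ne')
    have : (1 : ℝ) < x⁻¹ := (one_lt_inv₀ hx.1).mpr hx.2
    rw [hderiv.deriv]
    linarith

lemma sub_log_eq_of_mul_exp_neg_eq {x c : ℝ} (hx : 0 < x) (h : x * exp (-x) = exp c) :
    x - log x = -c := by
  have hlog := congrArg log h
  rw [log_mul hx.ne' (exp_ne_zero _), log_exp, log_exp] at hlog
  linarith

theorem stmt_11_general (b δB w : ℝ) (hb : 0 < b)
    (hu : w - 1 ∈ Set.Ioo (-1 : ℝ) 0)
    (huw : (w - 1) * Real.exp (w - 1) = -Real.exp (-δB - 1)) :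
    ∀ A ∈ Set.Ico (0 : ℝ) b,
      ((b - A) / b - Real.log ((b - A) / b) - 1 ≤ δB ↔ A ≤ w * b) := by
  rintro A ⟨hA0, hAb⟩
  have hs : 1 - w ∈ Ioc (0 : ℝ) 1 := ⟨by linarith [hu.2], by linarith [hu.1]⟩
  have hx : (b - A) / b ∈ Ioc (0 : ℝ) 1 :=
    ⟨div_pos (by linarith) hb, (div_le_one hb).mpr (by linarith)⟩
  have hlevel : (1 - w) - log (1 - w) = δB + 1 := by
    have h := sub_log_eq_of_mul_exp_neg_eq hs.1 (c := -δB - 1) (by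
      rw [neg_sub, ← neg_eq_iff_eq_neg.mpr huw]; ring)
    linarith
  calc (b - A) / b - log ((b - A) / b) - 1 ≤ δB
      ↔ (b - A) / b - log ((b - A) / b) ≤ (1 - w) - log (1 - w) := by
        rw [hlevel, sub_le_iff_le_add]
    _ ↔ 1 - w ≤ (b - A) / b := strictAntiOn_sub_log.le_iff_ge hx hs
    _ ↔ A ≤ w * b := by rw [le_div_iff₀ hb]; constructor <;> intro <;> linarith

/-- Positive exactness: for `𝔸 ∈ [0, b)` the barrier trust-region constraint is
equivalent to the linear constraint `𝔸 ≤ w·b`. -/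
theorem stmt_11 (b δB w : ℝ) (hb : 0 < b) (hδ : 0 < δB)
    (hu : w - 1 ∈ Set.Ioo (-1 : ℝ) 0)
    (huw : (w - 1) * Real.exp (w - 1) = -Real.exp (-δB - 1)) :
    ∀ A ∈ Set.Ico (0 : ℝ) b,
      ((b - A) / b - Real.log ((b - A) / b) - 1 ≤ δB ↔ A ≤ w * b) :=
  stmt_11_general b δB w hb hu huw
end

section
/- Suppose f is concave and g is convex on X, the constrained problem max f subject to g ≤ b has a solution with multiplier λ⋆, and κ > λ⋆. Then every maximizer of P_κ(x) = f(x) − κ·max{0, g(x) − b} over X is feasible, i.e., satisfies g(x) ≤ b (strict penalization of infeasible points: for any x̄ with g(x̄) > b, P_κ(x̄) < P_κ(x⋆)). -/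
/-!
The penalty `κ · max 0 (g x - b)` exceeds the Lagrangian charge `λ⋆ · (g x - b)` by
`(κ - λ⋆) · (g x - b) > 0` at every infeasible point, so there `P_κ < L(·, λ⋆)`. At the feasible
point `x⋆` the penalty vanishes and, by complementary slackness, `P_κ(x⋆) = L(x⋆, λ⋆)`, which is
the maximum of `L(·, λ⋆)`. Hence infeasible points lose strictly to `x⋆` and cannot maximize `P_κ`.
-/

section ExactPenalty

variable {α : Type*} {f g : α → ℝ} {b κ lam : ℝ} {x : α}

lemma penalty_eq_of_feasible (h : g x ≤ b) : f x - κ * max 0 (g x - b) = f x := by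
  rw [max_eq_left (sub_nonpos.mpr h), mul_zero, sub_zero]

lemma penalty_lt_lagrangian_of_infeasible (hκ : lam < κ) (h : b < g x) :
    f x - κ * max 0 (g x - b) < f x - lam * (g x - b) := by
  rw [max_eq_right (sub_nonneg.mpr h.le)]
  nlinarith [mul_pos (sub_pos.mpr hκ) (sub_pos.mpr h)]

end ExactPenalty

theorem stmt_12_general (n : ℕ) (X : Set (Fin n → ℝ)) (f g : (Fin n → ℝ) → ℝ) (b : ℝ)
    (xstar : Fin n → ℝ) (lamstar : ℝ)
    (hxX : xstar ∈ X) (hxfeas : g xstar ≤ b)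
    (hLag : ∀ x ∈ X, f x - lamstar * (g x - b) ≤ f xstar - lamstar * (g xstar - b))
    (hcs : lamstar * (g xstar - b) = 0)
    (κ : ℝ) (hκ : lamstar < κ) :
    (∀ xbar ∈ X, b < g xbar →
      f xbar - κ * max 0 (g xbar - b) < f xstar - κ * max 0 (g xstar - b)) ∧
    (∀ xbar ∈ X,
      (∀ x ∈ X, f x - κ * max 0 (g x - b) ≤ f xbar - κ * max 0 (g xbar - b)) →
      g xbar ≤ b) := by
  have strict : ∀ xbar ∈ X, b < g xbar →
      f xbar - κ * max 0 (g xbar - b) < f xstar - κ * max 0 (g xstar - b) :=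
    fun xbar hxbar hinfeas => calc
      f xbar - κ * max 0 (g xbar - b) < f xbar - lamstar * (g xbar - b) :=
        penalty_lt_lagrangian_of_infeasible hκ hinfeas
      _ ≤ f xstar - lamstar * (g xstar - b) := hLag xbar hxbar
      _ = f xstar - κ * max 0 (g xstar - b) := by
        rw [hcs, sub_zero, penalty_eq_of_feasible hxfeas]
  refine ⟨strict, fun xbar hxbar hmax => ?_⟩
  by_contra! hinfeas
  exact (hmax xstar hxX).not_gt (strict xbar hxbar hinfeas)

/-- Strict penalization of infeasible points: for `κ > λ⋆` every infeasible point has a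
strictly smaller penalized value than `x⋆`, hence every maximizer of `P_κ` is feasible. -/
theorem stmt_12 (n : ℕ) (X : Set (Fin n → ℝ)) (f g : (Fin n → ℝ) → ℝ) (b : ℝ)
    (hf : ConcaveOn ℝ X f) (hg : ConvexOn ℝ X g)
    (xstar : Fin n → ℝ) (lamstar : ℝ)
    (hxX : xstar ∈ X) (hxfeas : g xstar ≤ b)
    (hxmax : ∀ x ∈ X, g x ≤ b → f x ≤ f xstar)
    (hlam : 0 ≤ lamstar)
    (hLag : ∀ x ∈ X, f x - lamstar * (g x - b) ≤ f xstar - lamstar * (g xstar - b))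
    (hcs : lamstar * (g xstar - b) = 0)
    (κ : ℝ) (hκ : lamstar < κ) :
    (∀ xbar ∈ X, b < g xbar →
      f xbar - κ * max 0 (g xbar - b) < f xstar - κ * max 0 (g xstar - b)) ∧
    (∀ xbar ∈ X,
      (∀ x ∈ X, f x - κ * max 0 (g x - b) ≤ f xbar - κ * max 0 (g xbar - b)) →
      g xbar ≤ b) :=
  stmt_12_general n X f g b xstar lamstar hxX hxfeas hLag hcs κ hκ
end
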